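/- arXiv:1505.06637 — 4 statements merged into one kernel-verified Lean document; each statement's English description precedes it below -/
import Mathlib

section
/- Let A, B be 2×2 complex matrices with A invertible, and let Φ := fromBlocks A B (−conj B) (conj A). Then there exists a unique pair (A', C) of 2×2 complex matrices with A' invertible such that Φ = (fromBlocks A' 0 0 (conj A')) · (fromBlocks 1 C (−conj C) 1); namely A' = A and C = A⁻¹·B. -/
open Matrix

/-- Entrywise complex conjugation of a complex matrix. -/
noncomputable def mconj {n m : Type*} (M : Matrix n m ℂ) : Matrix n m ℂ :=
  M.map (starRingEnd ℂ)

lemma mconj_mul {n : Type*} [Fintype n] (M N : Matrix n n ℂ) :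
    mconj (M * N) = mconj M * mconj N := by
  simp [mconj, Matrix.map_mul]

/-- Unique factorization `Φ = diag(A', conj A') · [[1, C],[−conj C, 1]]` of a
quaternionic-type block matrix `Φ = [[A, B],[−conj B, conj A]]` with `A` invertible;
the unique factors are `A' = A` and `C = A⁻¹·B`. -/
theorem quaternionicType_unique_factorization
    (A B : Matrix (Fin 2) (Fin 2) ℂ) (hA : IsUnit A) :
    (∃! p : Matrix (Fin 2) (Fin 2) ℂ × Matrix (Fin 2) (Fin 2) ℂ,
      IsUnit p.1 ∧
      Matrix.fromBlocks A B (-(mconj B)) (mconj A) =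
        Matrix.fromBlocks p.1 0 0 (mconj p.1) *
          Matrix.fromBlocks 1 p.2 (-(mconj p.2)) 1) ∧
    (IsUnit A ∧
      Matrix.fromBlocks A B (-(mconj B)) (mconj A) =
        Matrix.fromBlocks A 0 0 (mconj A) *
          Matrix.fromBlocks 1 (A⁻¹ * B) (-(mconj (A⁻¹ * B))) 1) := by
  have hdet : IsUnit A.det := (Matrix.isUnit_iff_isUnit_det A).mp hA
  have hfact : ∀ X C : Matrix (Fin 2) (Fin 2) ℂ,
      Matrix.fromBlocks X 0 0 (mconj X) *
        Matrix.fromBlocks 1 C (-(mconj C)) 1 =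
      Matrix.fromBlocks X (X * C) (-(mconj X * mconj C)) (mconj X) := by
    intro X C
    rw [Matrix.fromBlocks_multiply]
    simp [Matrix.mul_neg]
  have hmain : Matrix.fromBlocks A B (-(mconj B)) (mconj A) =
      Matrix.fromBlocks A 0 0 (mconj A) *
        Matrix.fromBlocks 1 (A⁻¹ * B) (-(mconj (A⁻¹ * B))) 1 := by
    rw [hfact A, ← mconj_mul, Matrix.mul_nonsing_inv_cancel_left _ _ hdet]
  refine ⟨⟨(A, A⁻¹ * B), ⟨hA, hmain⟩, ?_⟩, hA, hmain⟩
  rintro ⟨A', C⟩ ⟨hA', heq⟩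
  simp only at heq
  rw [hfact A' C] at heq
  have h11 : A = A' := congrArg Matrix.toBlocks₁₁ heq
  have h12 : B = A' * C := congrArg Matrix.toBlocks₁₂ heq
  subst h11
  have hC : A⁻¹ * B = C := by
    rw [h12, Matrix.nonsing_inv_mul_cancel_left _ _ hdet]
  simp [hC]
end

section
/- For any 2×2 complex matrices A and B, the determinant of the 4×4 matrix M := fromBlocks A B (−conj B) (conj A) is a nonnegative real number, and it is strictly positive if and only if M is invertible. -/
/-!
Interleaving the two halves of the index set (swapping the second and third basis vectors)
turns `M` into a 2×2 block matrix whose blocks `Qᵢⱼ = [[Aᵢⱼ, Bᵢⱼ], [-B̄ᵢⱼ, Āᵢⱼ]]` are complex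
matrices of quaternions. These form a skew field (closed under sums, products and inverses)
whose nonzero elements have determinant `|z|² + |w|² > 0`. If `Q₁₁ ≠ 0`, the Schur complement
`Q₂₂ - Q₂₁ Q₁₁⁻¹ Q₁₂` is again such a block, so `det M = det Q₁₁ · det (Schur complement) ≥ 0`;
if `Q₁₁ = 0`, then `det M = det Q₁₂ · det Q₂₁ ≥ 0`. Here `≥ 0` is the order on `ℂ` whose
nonnegative elements are the nonnegative reals.
-/

open Matrix

open ComplexConjugate ComplexOrder

/-- The complex matrix of the quaternion `z + w j`. -/
def quatMatrix (z w : ℂ) : Matrix (Fin 2) (Fin 2) ℂ := !![z, w; -conj w, conj z]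

lemma quatMatrix_mul (z w z' w' : ℂ) :
    quatMatrix z w * quatMatrix z' w' =
      quatMatrix (z * z' - w * conj w') (z * w' + w * conj z') := by
  ext i j
  fin_cases i <;> fin_cases j <;> simp [quatMatrix, Matrix.mul_apply] <;> ring

lemma quatMatrix_sub (z w z' w' : ℂ) :
    quatMatrix z w - quatMatrix z' w' = quatMatrix (z - z') (w - w') := by
  ext i j
  fin_cases i <;> fin_cases j <;> simp [quatMatrix]
  ring

lemma quatMatrix_zero : quatMatrix 0 0 = 0 := by
  ext i j
  fin_cases i <;> fin_cases j <;> simp [quatMatrix]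

lemma det_quatMatrix (z w : ℂ) :
    (quatMatrix z w).det = ((Complex.normSq z + Complex.normSq w : ℝ) : ℂ) := by
  simp [quatMatrix, det_fin_two_of, Complex.mul_conj]

lemma det_quatMatrix_nonneg (z w : ℂ) : 0 ≤ (quatMatrix z w).det := by
  rw [det_quatMatrix]
  exact Complex.zero_le_real.mpr (add_nonneg (Complex.normSq_nonneg z) (Complex.normSq_nonneg w))

lemma quatMatrix_eq_zero_of_det_eq_zero {z w : ℂ} (h : (quatMatrix z w).det = 0) :
    quatMatrix z w = 0 := by
  rw [det_quatMatrix, Complex.ofReal_eq_zero,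
    add_eq_zero_iff_of_nonneg (Complex.normSq_nonneg z) (Complex.normSq_nonneg w),
    Complex.normSq_eq_zero, Complex.normSq_eq_zero] at h
  rw [h.1, h.2, quatMatrix_zero]

lemma inv_quatMatrix (z w : ℂ) :
    (quatMatrix z w)⁻¹ =
      quatMatrix (conj z / (quatMatrix z w).det) (-w / (quatMatrix z w).det) := by
  rw [inv_def, adjugate_fin_two, Ring.inverse_eq_inv']
  ext i j
  fin_cases i <;> fin_cases j <;> simp [quatMatrix] <;> ring

lemma det_fromBlocks_zero₁₁ {R n : Type*} [CommRing R] [Fintype n] [DecidableEq n]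
    (B C D : Matrix n n R) :
    (fromBlocks 0 B C D).det = (-1) ^ Fintype.card n * B.det * C.det := by
  have : fromBlocks 0 B C D = fromBlocks 0 1 1 1 * fromBlocks C (D - B) 0 B := by
    simp [fromBlocks_multiply]
  rw [this, det_mul, det_fromBlocks_one₂₂, det_fromBlocks_zero₂₁, Matrix.mul_one, zero_sub,
    det_neg, det_one]
  ring

lemma det_fromBlocks_quatMatrix_nonneg (a p b q c r d s : ℂ) :
    0 ≤ (fromBlocks (quatMatrix a p) (quatMatrix b q) (quatMatrix c r) (quatMatrix d s)).det := by
  by_cases h : (quatMatrix a p).det = 0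
  · rw [quatMatrix_eq_zero_of_det_eq_zero h, det_fromBlocks_zero₁₁]
    simpa using mul_nonneg (det_quatMatrix_nonneg b q) (det_quatMatrix_nonneg c r)
  · have := invertibleOfIsUnitDet _ (isUnit_iff_ne_zero.mpr h)
    rw [det_fromBlocks₁₁, invOf_eq_nonsing_inv, inv_quatMatrix, quatMatrix_mul, quatMatrix_mul,
      quatMatrix_sub]
    exact mul_nonneg (det_quatMatrix_nonneg a p) (det_quatMatrix_nonneg _ _)

lemma fromBlocks_mconj_submatrix_swap (A B : Matrix (Fin 2) (Fin 2) ℂ) :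
    (fromBlocks A B (-mconj B) (mconj A)).submatrix
        (Equiv.swap (Sum.inl 1) (Sum.inr 0)) (Equiv.swap (Sum.inl 1) (Sum.inr 0)) =
      fromBlocks (quatMatrix (A 0 0) (B 0 0)) (quatMatrix (A 0 1) (B 0 1))
        (quatMatrix (A 1 0) (B 1 0)) (quatMatrix (A 1 1) (B 1 1)) := by
  ext (i | i) (j | j) <;> fin_cases i <;> fin_cases j <;>
    simp [quatMatrix, mconj, Equiv.swap_apply_of_ne_of_ne]

lemma det_fromBlocks_mconj_nonneg (A B : Matrix (Fin 2) (Fin 2) ℂ) :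
    0 ≤ (fromBlocks A B (-mconj B) (mconj A)).det := by
  rw [← det_submatrix_equiv_self (Equiv.swap (Sum.inl 1) (Sum.inr 0)),
    fromBlocks_mconj_submatrix_swap]
  exact det_fromBlocks_quatMatrix_nonneg ..

/-- For any 2×2 complex matrices `A`, `B`, the determinant of the quaternionic-type
matrix `M = [[A, B],[−conj B, conj A]]` is a nonnegative real number, and it is
strictly positive iff `M` is invertible. -/
theorem quaternionicType_det_nonneg (A B : Matrix (Fin 2) (Fin 2) ℂ) :
    ((Matrix.fromBlocks A B (-(mconj B)) (mconj A)).det.im = 0 ∧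
      0 ≤ (Matrix.fromBlocks A B (-(mconj B)) (mconj A)).det.re) ∧
    (0 < (Matrix.fromBlocks A B (-(mconj B)) (mconj A)).det.re ↔
      IsUnit (Matrix.fromBlocks A B (-(mconj B)) (mconj A))) := by
  have hdet := det_fromBlocks_mconj_nonneg A B
  obtain ⟨hre, him⟩ := Complex.nonneg_iff.mp hdet
  refine ⟨⟨him.symm, hre⟩, ?_⟩
  rw [isUnit_iff_isUnit_det, isUnit_iff_ne_zero]
  constructor
  · intro hpos hzero
    simp [hzero] at hpos
  · intro hne
    exact (Complex.pos_iff.mp (lt_of_le_of_ne hdet (Ne.symm hne))).1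
end

section
/- Let P be a Hermitian 2×2 complex matrix, q ∈ ℂ, ε := [[0,1],[−1,0]], M := fromBlocks P (q•ε) ((−conj q)•ε) (conj P), and let η := diag(1, −1, 1, −1) as a 4×4 real-diagonal complex matrix. Set N := P₀₀ − P₁₁ (a real number, since the diagonal entries of a Hermitian matrix are real) and m := det P − q·conj q (a real number). Then trace(η·M) = 2N, trace((η·M)²) = 2N² + 4m, and trace((η·M)³) = 2N³ + 6N·m. -/
open Matrix

/-- The antisymmetric matrix `ε = [[0,1],[−1,0]]`. -/
noncomputable def epsMat : Matrix (Fin 2) (Fin 2) ℂ := !![0, 1; -1, 0]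

/-- The twistorial metric `η = diag(1, −1, 1, −1)` as a 4×4 complex matrix. -/
noncomputable def etaTwistor : Matrix (Fin 2 ⊕ Fin 2) (Fin 2 ⊕ Fin 2) ℂ :=
  Matrix.fromBlocks (Matrix.diagonal ![1, -1]) 0 0 (Matrix.diagonal ![1, -1])

/-- Trace invariants of `M = [[P, qε],[−conj(q)ε, conj P]]` with `P` Hermitian:
setting `N := P₀₀ − P₁₁` and `m := det P − q·conj q` (both real), one has
`tr(ηM) = 2N`, `tr((ηM)²) = 2N² + 4m` and `tr((ηM)³) = 2N³ + 6N·m`. -/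
theorem trace_invariants_hermitian_form
    (P : Matrix (Fin 2) (Fin 2) ℂ) (hP : Pᴴ = P) (q : ℂ) :
    (P 0 0 - P 1 1).im = 0 ∧
    (P.det - q * starRingEnd ℂ q).im = 0 ∧
    (etaTwistor *
        Matrix.fromBlocks P (q • epsMat) ((-(starRingEnd ℂ q)) • epsMat) (mconj P)).trace
      = 2 * (P 0 0 - P 1 1) ∧
    ((etaTwistor *
        Matrix.fromBlocks P (q • epsMat) ((-(starRingEnd ℂ q)) • epsMat) (mconj P)) ^ 2).trace
      = 2 * (P 0 0 - P 1 1) ^ 2 + 4 * (P.det - q * starRingEnd ℂ q) ∧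
    ((etaTwistor *
        Matrix.fromBlocks P (q • epsMat) ((-(starRingEnd ℂ q)) • epsMat) (mconj P)) ^ 3).trace
      = 2 * (P 0 0 - P 1 1) ^ 3 +
          6 * (P 0 0 - P 1 1) * (P.det - q * starRingEnd ℂ q) := by
  have h00 : starRingEnd ℂ (P 0 0) = P 0 0 := congrFun (congrFun hP 0) 0
  have h11 : starRingEnd ℂ (P 1 1) = P 1 1 := congrFun (congrFun hP 1) 1
  have h10 : starRingEnd ℂ (P 0 1) = P 1 0 := congrFun (congrFun hP 1) 0
  have h01 : starRingEnd ℂ (P 1 0) = P 0 1 := congrFun (congrFun hP 0) 1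
  refine ⟨?_, ?_, ?_, ?_, ?_⟩
  · have h1 := congrArg Complex.im h00
    have h2 := congrArg Complex.im h11
    simp [Complex.conj_im] at h1 h2
    simp [Complex.sub_im]
    linarith
  · have h1 := congrArg Complex.im h00
    have h2 := congrArg Complex.im h11
    have h3 := congrArg Complex.im h10
    have h4 := congrArg Complex.re h10
    simp [Complex.conj_im, Complex.conj_re] at h1 h2 h3 h4
    have e1 : (P 0 0).im = 0 := by linarith
    have e2 : (P 1 1).im = 0 := by linarith
    simp [Matrix.det_fin_two, Complex.sub_im, Complex.mul_im, Complex.conj_im, Complex.conj_re, e1, e2]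
    rw [← h3, ← h4]; ring
  · simp [Matrix.trace, Fintype.sum_sum_type, Fin.sum_univ_succ, mconj, etaTwistor, epsMat,
      Matrix.mul_apply, Matrix.fromBlocks, h00, h11]
    ring
  · rw [pow_two]
    simp [Matrix.trace, Fintype.sum_sum_type, Fin.sum_univ_succ, mconj, etaTwistor, epsMat,
      Matrix.mul_apply, Matrix.fromBlocks, Matrix.det_fin_two]
    simp only [Complex.conj_conj, h00, h11, h10, h01]
    ring
  · rw [pow_succ, pow_two]
    simp [Matrix.trace, Fintype.sum_sum_type, Fin.sum_univ_succ, mconj, etaTwistor, epsMat,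
      Matrix.mul_apply, Matrix.fromBlocks, Matrix.det_fin_two]
    simp only [Complex.conj_conj, h00, h11, h10, h01]
    ring
end

section
/- Let ν : ℂ⁴ → ℂ⁴ be defined by ν(v) := J·conj v, and let H : ℂ⁴ × ℂ⁴ → ℂ be sesquilinear (ℂ-linear in the first argument, conjugate-linear in the second) and Hermitian, i.e. H(x,y) = conj(H(y,x)) for all x, y. Define H*(x,y) := ½·(H(x,y) + H(ν y, ν x)). Then: (i) H* is sesquilinear and Hermitian; (ii) H*(x, ν y) = −H*(y, ν x) for all x, y, and in particular H*(x, ν x) = 0 for every x; (iii) H*(ν x, ν y) = conj(H*(x,y)) for all x, y. -/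
open Matrix

/-- The matrix `J = [[0, −I₂],[I₂, 0]]` (in 2×2 blocks). -/
noncomputable def Jmat : Matrix (Fin 2 ⊕ Fin 2) (Fin 2 ⊕ Fin 2) ℂ :=
  Matrix.fromBlocks 0 (-1) 1 0

/-- The conjugate-linear map `ν(v) := J·conj v` on `ℂ⁴`, with `ν ∘ ν = −id`. -/
noncomputable def nuFour (v : Fin 2 ⊕ Fin 2 → ℂ) : Fin 2 ⊕ Fin 2 → ℂ :=
  Jmat.mulVec (fun i => starRingEnd ℂ (v i))

/-- The averaged form `H*(x,y) := ½·(H(x,y) + H(ν y, ν x))`. -/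
noncomputable def Hstar
    (H : (Fin 2 ⊕ Fin 2 → ℂ) → (Fin 2 ⊕ Fin 2 → ℂ) → ℂ)
    (x y : Fin 2 ⊕ Fin 2 → ℂ) : ℂ :=
  (1 / 2 : ℂ) * (H x y + H (nuFour y) (nuFour x))

lemma Jmat_sq : Jmat * Jmat = -1 := by
  simp [Jmat, Matrix.fromBlocks_multiply]
  ext (i|i) (j|j) <;> simp [Matrix.fromBlocks, Matrix.one_apply]

lemma nu_nu (v : Fin 2 ⊕ Fin 2 → ℂ) : nuFour (nuFour v) = -v := by
  have h1 : (fun i => starRingEnd ℂ (nuFour v i)) = Jmat.mulVec v := by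
    funext i
    simp [nuFour, Matrix.mulVec, dotProduct, map_sum, Jmat, Matrix.fromBlocks,
      Matrix.one_apply]
    cases i <;> simp [Matrix.fromBlocks, Matrix.one_apply]
  show Jmat.mulVec (fun i => starRingEnd ℂ (nuFour v i)) = -v
  rw [h1, Matrix.mulVec_mulVec, Jmat_sq]
  simp [Matrix.neg_mulVec]

lemma nu_add (x y : Fin 2 ⊕ Fin 2 → ℂ) : nuFour (x + y) = nuFour x + nuFour y := by
  funext i
  simp [nuFour, Matrix.mulVec, dotProduct, mul_add, Finset.sum_add_distrib]

lemma nu_smul (c : ℂ) (x : Fin 2 ⊕ Fin 2 → ℂ) :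
    nuFour (c • x) = (starRingEnd ℂ c) • nuFour x := by
  funext i
  simp [nuFour, Matrix.mulVec, dotProduct, Finset.mul_sum]
  ring

/-- For a Hermitian sesquilinear form `H` on `ℂ⁴`: (i) `H*` is again sesquilinear and
Hermitian; (ii) `H*(x, ν y) = −H*(y, ν x)`, in particular `H*(x, ν x) = 0`;
(iii) `H*(ν x, ν y) = conj(H*(x,y))`. -/
theorem averaged_hermitian_form_properties
    (H : (Fin 2 ⊕ Fin 2 → ℂ) → (Fin 2 ⊕ Fin 2 → ℂ) → ℂ)
    (h_add_l : ∀ x x' y, H (x + x') y = H x y + H x' y)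
    (h_smul_l : ∀ (c : ℂ) x y, H (c • x) y = c * H x y)
    (h_add_r : ∀ x y y', H x (y + y') = H x y + H x y')
    (h_smul_r : ∀ (c : ℂ) x y, H x (c • y) = starRingEnd ℂ c * H x y)
    (h_herm : ∀ x y, H x y = starRingEnd ℂ (H y x)) :
    (∀ x x' y, Hstar H (x + x') y = Hstar H x y + Hstar H x' y) ∧
    (∀ (c : ℂ) x y, Hstar H (c • x) y = c * Hstar H x y) ∧
    (∀ x y y', Hstar H x (y + y') = Hstar H x y + Hstar H x y') ∧
    (∀ (c : ℂ) x y, Hstar H x (c • y) = starRingEnd ℂ c * Hstar H x y) ∧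
    (∀ x y, Hstar H x y = starRingEnd ℂ (Hstar H y x)) ∧
    (∀ x y, Hstar H x (nuFour y) = -Hstar H y (nuFour x)) ∧
    (∀ x, Hstar H x (nuFour x) = 0) ∧
    (∀ x y, Hstar H (nuFour x) (nuFour y) = starRingEnd ℂ (Hstar H x y)) := by
  have hneg_l : ∀ x y, H (-x) y = -H x y := by
    intro x y
    have := h_smul_l (-1) x y
    simpa using this
  have hneg_r : ∀ x y, H x (-y) = -H x y := by
    intro x y
    have := h_smul_r (-1) x y
    simpa using this
  have hconj : ∀ x y, starRingEnd ℂ (H x y) = H y x := by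
    intro x y
    rw [h_herm x y, Complex.conj_conj]
  have key6 : ∀ x y, Hstar H x (nuFour y) = -Hstar H y (nuFour x) := by
    intro x y
    unfold Hstar
    rw [nu_nu, nu_nu, hneg_l, hneg_l]
    ring
  refine ⟨?_, ?_, ?_, ?_, ?_, key6, ?_, ?_⟩
  · intro x x' y
    unfold Hstar
    rw [h_add_l, nu_add, h_add_r]
    ring
  · intro c x y
    unfold Hstar
    rw [h_smul_l, nu_smul, h_smul_r, Complex.conj_conj]
    ring
  · intro x y y'
    unfold Hstar
    rw [h_add_r, nu_add, h_add_l]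
    ring
  · intro c x y
    unfold Hstar
    rw [h_smul_r, nu_smul, h_smul_l]
    ring
  · intro x y
    unfold Hstar
    rw [_root_.map_mul, map_add, hconj, hconj, map_div₀, _root_.map_one, Complex.conj_ofNat]
  · intro x
    have := key6 x x
    linear_combination (1/2 : ℂ) * this
  · intro x y
    unfold Hstar
    rw [nu_nu, nu_nu, _root_.map_mul, map_add, hconj, hconj, hneg_l, hneg_r,
      map_div₀, _root_.map_one, Complex.conj_ofNat]
    ring
end
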